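/- Let n, N ∈ ℕ and a_1, …, a_{3n} ∈ ℕ satisfy N/4 < a_i < N/2 for all i and Σ_{i=1}^{3n} a_i = nN, and let v, w be the associated words over 𝒜 = {a,b,c,d}. If this instance of 3-PARTITION is solvable, then d_cbi(v, w) ≤ 3n. -/

import Mathlib

/-- Two positive words are related if they contain the same number of each letter. -/
def Related {A : Type*} [DecidableEq A] (v w : List A) : Prop :=
  ∀ a : A, v.count a = w.count a

/-- `w` is a cyclic block interchange of `v`. -/
def IsCBI {A : Type*} (v w : List A) : Prop :=
  ∃ v' w' : List A, List.IsRotated v' v ∧ List.IsRotated w' w ∧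
    ∃ w1 w2 w3 w4 : List A, v' = w1 ++ w2 ++ w3 ++ w4 ∧ w' = w1 ++ w4 ++ w3 ++ w2

open Classical in
/-- The cyclic block interchange distance between two related words. -/
noncomputable def dcbi {A : Type*} (v w : List A) : ℕ :=
  if List.IsRotated v w then 0
  else sInf {k | ∃ z : ℕ → List A, z 0 = v ∧ z k = w ∧ ∀ i < k, IsCBI (z i) (z (i + 1))}

/-- The four-letter alphabet `𝒜 = {a,b,c,d}`. -/
inductive Letter where
  | a | b | c | d
deriving DecidableEq

open Letter

/-- The word `v = a^(n+1) (b c^(a₁) d)(b c^(a₂) d) ⋯ (b c^(a_{3n}) d) b`. -/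
def vWord (n : ℕ) (f : Fin (3 * n) → ℕ) : List Letter :=
  List.replicate (n + 1) a ++
    (List.ofFn fun i : Fin (3 * n) => b :: (List.replicate (f i) c ++ [d])).flatten ++ [b]

/-- The word `w = (a c^N d³)^n a b^(3n+1)`. -/
def wWord (n N : ℕ) : List Letter :=
  (List.replicate n (a :: (List.replicate N c ++ [d, d, d]))).flatten ++
    a :: List.replicate (3 * n + 1) b

/-- The instance of 3-PARTITION given by `a₁, …, a_{3n}` and `N` is solvable:
`{1, …, 3n}` can be partitioned into `n` three-element sets, each summing to `N`. -/
def Solvable3Partition (n N : ℕ) (f : Fin (3 * n) → ℕ) : Prop :=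
  ∃ P : Fin n → Finset (Fin (3 * n)),
    (∀ j, (P j).card = 3) ∧ (∀ j, ∑ i ∈ P j, f i = N) ∧ (∀ i, ∃! j, i ∈ P j)

/-!
Let `g i` be the triple containing item `i` in a solution. Starting from `v`, move the blocks
`c^(a_i) d` one at a time, for `i = 1, …, 3n`: the block of item `i` is cut out after the `i`-th
`b` and reinserted right after the `c`'s following the `(g i)`-th `a`. The piece it jumps over is
adjacent to it, so each move is a block interchange. Afterwards every `b` is alone, and the
`j`-th `a` is followed by `c^N d³` because its triple has weight `N` and three elements; this is `w`.
-/

open Finset Letter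

theorem isCBI_append_swap {A : Type*} (p x y s : List A) :
    IsCBI (p ++ x ++ y ++ s) (p ++ y ++ x ++ s) :=
  ⟨x ++ y ++ (s ++ p), s ++ p ++ y ++ x,
    by simpa using List.isRotated_append (l := x ++ y ++ s) (l' := p),
    by simpa using List.isRotated_append (l := s) (l' := p ++ y ++ x),
    [], x, y, s ++ p, by simp, by simp⟩

theorem dcbi_le_of_chain {A : Type*} {v w : List A} {k : ℕ} (z : ℕ → List A)
    (h0 : z 0 = v) (hk : z k = w) (hstep : ∀ i < k, IsCBI (z i) (z (i + 1))) :
    dcbi v w ≤ k := by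
  unfold dcbi
  split_ifs
  · exact k.zero_le
  · exact Nat.sInf_le ⟨z, h0, hk, hstep⟩

theorem List.exists_flatten_ofFn_eq_of_forall_ne {X : Type*} {m : ℕ} (j₀ : Fin m)
    (F G : Fin m → List X) (h : ∀ j, j ≠ j₀ → G j = F j) :
    ∃ A B, (List.ofFn F).flatten = A ++ F j₀ ++ B ∧ (List.ofFn G).flatten = A ++ G j₀ ++ B := by
  induction m with
  | zero => exact j₀.elim0
  | succ m ih =>
    rcases Fin.eq_zero_or_eq_succ j₀ with rfl | ⟨j', rfl⟩
    · have hG : (fun j : Fin m => G j.succ) = fun j => F j.succ :=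
        funext fun j => h j.succ (Fin.succ_ne_zero j)
      exact ⟨[], (List.ofFn fun j : Fin m => F j.succ).flatten,
        by simp [List.ofFn_succ], by simp [List.ofFn_succ, hG]⟩
    · obtain ⟨A, B, hF, hG⟩ := ih j' (fun j => F j.succ) (fun j => G j.succ)
        fun j hj => h j.succ (Fin.succ_injective _ |>.ne hj)
      have h0 : G 0 = F 0 := h 0 (Fin.succ_ne_zero j').symm
      exact ⟨F 0 ++ A, B, by simp [List.ofFn_succ, hF], by simp [List.ofFn_succ, hG, h0]⟩

theorem Fin.filter_val_lt_succ {m k : ℕ} (hk : k < m) :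
    ({i : Fin m | i.val < k + 1} : Finset (Fin m)) =
      insert ⟨k, hk⟩ ({i | i.val < k} : Finset (Fin m)) := by
  ext i
  simp only [mem_filter, mem_univ, true_and, mem_insert, Fin.ext_iff]
  omega

theorem Solvable3Partition.exists_assignment {n N : ℕ} {f : Fin (3 * n) → ℕ}
    (h : Solvable3Partition n N f) :
    ∃ g : Fin (3 * n) → Fin n, ∀ j, #{i | g i = j} = 3 ∧ ∑ i with g i = j, f i = N := by
  obtain ⟨P, hcard, hsum, hunique⟩ := h
  choose g hg hg_unique using hunique
  have hP : ∀ j, P j = ({i | g i = j} : Finset _) := fun j => by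
    ext i
    simp only [mem_filter, mem_univ, true_and]
    exact ⟨fun hi => (hg_unique i j hi).symm, by rintro rfl; exact hg i⟩
  exact ⟨g, fun j => hP j ▸ ⟨hcard j, hsum j⟩⟩

section PartialWord

variable {m n : ℕ} (f : Fin m → ℕ) (g : Fin m → Fin n)

def groupBlock (s : Finset (Fin m)) (j : Fin n) : List Letter :=
  a :: (List.replicate (∑ i ∈ s with g i = j, f i) c ++ List.replicate #{i ∈ s | g i = j} d)

def itemBlock (s : Finset (Fin m)) (i : Fin m) : List Letter :=
  b :: if i ∈ s then [] else List.replicate (f i) c ++ [d]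

/-- The intermediate word once the blocks of the items in `s` have been moved. -/
def partialWord (s : Finset (Fin m)) : List Letter :=
  (List.ofFn (groupBlock f g s)).flatten ++ a :: (List.ofFn (itemBlock f s)).flatten ++ [b]

variable {f g} {s : Finset (Fin m)} {i : Fin m}

theorem groupBlock_insert_of_ne {j : Fin n} (hj : g i ≠ j) :
    groupBlock f g (insert i s) j = groupBlock f g s j := by
  simp [groupBlock, filter_insert, hj]

theorem groupBlock_insert_self (hi : i ∉ s) :
    groupBlock f g (insert i s) (g i) =
      a :: (List.replicate (∑ k ∈ s with g k = g i, f k) c ++ (List.replicate (f i) c ++ [d]) ++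
        List.replicate #{k ∈ s | g k = g i} d) := by
  have hi' : i ∉ ({k ∈ s | g k = g i} : Finset _) := by simp [hi]
  simp only [groupBlock, filter_insert, if_pos, sum_insert hi', card_insert_of_notMem hi',
    add_comm (f i), List.replicate_add, List.replicate_succ, List.append_assoc, List.cons_append,
    List.nil_append]

theorem itemBlock_insert_of_ne {i' : Fin m} (hi : i' ≠ i) :
    itemBlock f (insert i s) i' = itemBlock f s i' := by
  simp [itemBlock, hi]

theorem isCBI_partialWord_insert (hi : i ∉ s) :
    IsCBI (partialWord f g s) (partialWord f g (insert i s)) := by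
  obtain ⟨A₁, B₁, hs₁, hins₁⟩ := List.exists_flatten_ofFn_eq_of_forall_ne (g i)
    (groupBlock f g s) (groupBlock f g (insert i s))
    fun j hj => groupBlock_insert_of_ne (Ne.symm hj)
  obtain ⟨A₂, B₂, hs₂, hins₂⟩ := List.exists_flatten_ofFn_eq_of_forall_ne i
    (itemBlock f s) (itemBlock f (insert i s)) fun i' hi' => itemBlock_insert_of_ne hi'
  rw [partialWord, partialWord, hs₁, hs₂, hins₁, hins₂, groupBlock_insert_self hi]
  convert isCBI_append_swap (A₁ ++ a :: List.replicate (∑ k ∈ s with g k = g i, f k) c)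
    (List.replicate #{k ∈ s | g k = g i} d ++ B₁ ++ a :: A₂ ++ [b])
    (List.replicate (f i) c ++ [d]) (B₂ ++ [b]) using 1 <;> simp [groupBlock, itemBlock, hi]

end PartialWord

theorem partialWord_empty {n : ℕ} (f : Fin (3 * n) → ℕ) (g : Fin (3 * n) → Fin n) :
    partialWord f g ∅ = vWord n f := by
  have hgroup : groupBlock f g ∅ = fun _ => [a] := funext fun j => by simp [groupBlock]
  have hitem : itemBlock f ∅ = fun i => b :: (List.replicate (f i) c ++ [d]) :=
    funext fun i => by simp [itemBlock]
  rw [partialWord, hgroup, hitem, List.ofFn_const]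
  simp [vWord, List.replicate_succ']

theorem partialWord_univ {n N : ℕ} {f : Fin (3 * n) → ℕ} {g : Fin (3 * n) → Fin n}
    (hg : ∀ j, #{i | g i = j} = 3 ∧ ∑ i with g i = j, f i = N) :
    partialWord f g univ = wWord n N := by
  have hgroup : groupBlock f g univ = fun _ => a :: (List.replicate N c ++ [d, d, d]) :=
    funext fun j => by simp [groupBlock, (hg j).1, (hg j).2, List.replicate_succ]
  have hitem : itemBlock f univ = fun _ => [b] := funext fun i => by simp [itemBlock]
  rw [partialWord, hgroup, hitem, List.ofFn_const, List.ofFn_const]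
  simp [wWord, List.replicate_succ']

theorem three_partition_dcbi_le_general (n N : ℕ) (f : Fin (3 * n) → ℕ)
    (hsol : Solvable3Partition n N f) :
    dcbi (vWord n f) (wWord n N) ≤ 3 * n := by
  obtain ⟨g, hg⟩ := hsol.exists_assignment
  refine dcbi_le_of_chain (fun k => partialWord f g {i | i.val < k}) ?_ ?_ fun k hk => ?_
  · simpa using partialWord_empty f g
  · simpa using partialWord_univ hg
  · simp only [Fin.filter_val_lt_succ hk]
    exact isCBI_partialWord_insert (by simp)

/-- If the instance of 3-PARTITION is solvable, then `d_cbi(v,w) ≤ 3n` for the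
associated words `v, w`. -/
theorem three_partition_dcbi_le (n N : ℕ) (f : Fin (3 * n) → ℕ)
    (hbound : ∀ i, N < 4 * f i ∧ 2 * f i < N) (hsum : ∑ i, f i = n * N)
    (hsol : Solvable3Partition n N f) :
    dcbi (vWord n f) (wWord n N) ≤ 3 * n :=
  three_partition_dcbi_le_general n N f hsol
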